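/- arXiv:1508.05579 — 2 statements merged into one kernel-verified Lean document; each statement's English description precedes it below -/
import Mathlib

section
/- Let H be a finite moment graph over a lattice X with structure algebra Z(H) over a field k, and let L ⊆ X be a saturated sublattice. Then the canonical inclusion Z(H) → Z(H^L) becomes an isomorphism after localization at S^L, i.e. Z(H) ⊗_S S^L → Z(H^L) ⊗_S S^L is an isomorphism. -/
open scoped TensorProduct

/-- A moment graph over the lattice `X`: vertices, edges with two endpoints,
and a labelling of the edges by elements of `X` (representing classes in
`X/{±1}`), with no loops. -/
structure MomentGraph (X : Type) where
  V : Type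
  E : Type
  src : E → V
  tgt : E → V
  label : E → X
  no_loop : ∀ e, src e ≠ tgt e

variable {n : ℕ} {k : Type} [Field k]

/-- The embedding of the lattice `X = ℤⁿ` into the symmetric algebra
`S = Sym(X ⊗ k)` (realized as a polynomial ring), as degree one (degree two
for the grading of the paper) elements. -/
noncomputable def latEmb (k : Type) [Field k] (n : ℕ) (v : Fin n → ℤ) :
    MvPolynomial (Fin n) k :=
  ∑ i, MvPolynomial.C (v i : k) * MvPolynomial.X i

/-- The structure algebra `Z(H)` of a moment graph, as an `S`-submodule of
`∏_{x ∈ V} S`: tuples `(z_x)` with `z_x ≡ z_y mod α(E)` for every edge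
`E : x — y`. -/
noncomputable def structAlg (G : MomentGraph (Fin n → ℤ)) (k : Type) [Field k] :
    Submodule (MvPolynomial (Fin n) k) (G.V → MvPolynomial (Fin n) k) where
  carrier := {z | ∀ e, z (G.src e) - z (G.tgt e) ∈ Ideal.span {latEmb k n (G.label e)}}
  add_mem' := by
    intro a b ha hb e
    have := Ideal.add_mem _ (ha e) (hb e)
    simpa [add_sub_add_comm] using this
  zero_mem' := by
    intro e
    simp
  smul_mem' := by
    intro c z hz e
    simpa [smul_sub, mul_sub] using (Ideal.span {latEmb k n (G.label e)}).smul_mem c (hz e)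

/-- The subgraph `H^L`: all vertices, but only the edges whose labels lie in
the sublattice `L`. -/
@[reducible] def MomentGraph.restrict (G : MomentGraph (Fin n → ℤ)) (L : Submodule ℤ (Fin n → ℤ)) :
    MomentGraph (Fin n → ℤ) where
  V := G.V
  E := {e : G.E // G.label e ∈ L}
  src e := G.src e.1
  tgt e := G.tgt e.1
  label e := G.label e.1
  no_loop e := G.no_loop e.1

lemma structAlg_le_restrict (G : MomentGraph (Fin n → ℤ))
    (L : Submodule ℤ (Fin n → ℤ)) (k : Type) [Field k] :
    structAlg G k ≤ structAlg (G.restrict L) k :=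
  fun _ hz e => hz e.1


/-!
Let `f` be the product of the labels of the edges of `H` whose label is outside `L`. For `z ∈ Z(H^L)`
the tuple `f • z` satisfies the congruences along the edges of `H^L` because `z` does, and along
the remaining edges because `f` is divisible by their labels; so `f • Z(H^L) ⊆ Z(H)`. Each such label
is nonzero, so `f` becomes a unit in `S^L`, and the localized inclusion is surjective. It is injective
because `S^L` is flat over `S`.
-/

section TensorLocalization

variable {R A P : Type*} [CommSemiring R] [CommSemiring A] [Algebra R A]
  [AddCommMonoid P] [Module R P]

theorem TensorProduct.smul_bijective_of_isUnit_algebraMap {s : R}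
    (hs : IsUnit (algebraMap R A s)) :
    Function.Bijective (fun x : P ⊗[R] A => s • x) := by
  have hunit : IsUnit (algebraMap R (Module.End R (P ⊗[R] A)) s) := by
    rw [← (Module.End.lTensorAlgHom R A P).commutes, ← (Algebra.lmul R A).commutes]
    exact hs.map ((Module.End.lTensorAlgHom R A P).comp (Algebra.lmul R A))
  exact (Module.End.isUnit_iff _).mp hunit

theorem Submodule.rTensor_inclusion_surjective_of_smul_mem {N N' : Submodule R P} (h : N ≤ N')
    {s : R} (hs : IsUnit (algebraMap R A s)) (hsN : ∀ x ∈ N', s • x ∈ N) :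
    Function.Surjective ((Submodule.inclusion h).rTensor A) := by
  let g : N' →ₗ[R] N := (s • N'.subtype).codRestrict N fun x => hsN x x.2
  have hcomp : Submodule.inclusion h ∘ₗ g = s • LinearMap.id := by ext; rfl
  refine Function.Surjective.of_comp (g := g.rTensor A) ?_
  rw [← LinearMap.coe_comp, ← LinearMap.rTensor_comp, hcomp, LinearMap.rTensor_smul,
    LinearMap.rTensor_id]
  exact (TensorProduct.smul_bijective_of_isUnit_algebraMap hs).2

theorem Submodule.rTensor_inclusion_bijective_of_smul_mem [Module.Flat R A]
    {N N' : Submodule R P} (h : N ≤ N') {s : R} (hs : IsUnit (algebraMap R A s))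
    (hsN : ∀ x ∈ N', s • x ∈ N) :
    Function.Bijective ((Submodule.inclusion h).rTensor A) :=
  ⟨Module.Flat.rTensor_preserves_injective_linearMap _ (Submodule.inclusion_injective h),
    Submodule.rTensor_inclusion_surjective_of_smul_mem h hs hsN⟩

end TensorLocalization

namespace MomentGraph

theorem smul_mem_structAlg_of_mem_restrict (G : MomentGraph (Fin n → ℤ))
    {L : Submodule ℤ (Fin n → ℤ)} {f : MvPolynomial (Fin n) k}
    (hf : ∀ e, G.label e ∉ L → latEmb k n (G.label e) ∣ f)
    {z : G.V → MvPolynomial (Fin n) k} (hz : z ∈ structAlg (G.restrict L) k) :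
    f • z ∈ structAlg G k := by
  intro e
  rw [Pi.smul_apply, Pi.smul_apply, ← smul_sub]
  by_cases he : G.label e ∈ L
  · exact Ideal.mul_mem_left _ f (hz ⟨e, he⟩)
  · exact Ideal.mem_span_singleton.mpr ((hf e he).mul_right _)

end MomentGraph

theorem structAlg_localization_bijective_general
    (G : MomentGraph (Fin n → ℤ)) (k : Type) [Field k]
    [Finite G.E]
    (L : Submodule ℤ (Fin n → ℤ)) :
    Function.Bijective
      (LinearMap.rTensor
        (Localization (Submonoid.closure
          {s : MvPolynomial (Fin n) k | ∃ α : Fin n → ℤ, α ≠ 0 ∧ α ∉ L ∧ s = latEmb k n α}))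
        (Submodule.inclusion (structAlg_le_restrict G L k))) := by
  classical
  have := Fintype.ofFinite G.E
  let f := ∏ e ∈ Finset.univ.filter (G.label · ∉ L), latEmb k n (G.label e)
  have hfM : f ∈ Submonoid.closure
      {s | ∃ α : Fin n → ℤ, α ≠ 0 ∧ α ∉ L ∧ s = latEmb k n α} :=
    Submonoid.prod_mem _ fun e he =>
      have he : G.label e ∉ L := (Finset.mem_filter.mp he).2
      Submonoid.subset_closure ⟨G.label e, fun h0 => he (h0 ▸ L.zero_mem), he, rfl⟩
  have hdvd : ∀ e, G.label e ∉ L → latEmb k n (G.label e) ∣ f := fun e he =>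
    Finset.dvd_prod_of_mem _ (Finset.mem_filter.mpr ⟨Finset.mem_univ e, he⟩)
  exact Submodule.rTensor_inclusion_bijective_of_smul_mem (structAlg_le_restrict G L k)
    (IsLocalization.map_units _ ⟨f, hfM⟩) fun _ hz => G.smul_mem_structAlg_of_mem_restrict hdvd hz

/-- For a finite moment graph `H` over `X` and a saturated
sublattice `L ⊆ X`, the canonical inclusion `Z(H) → Z(H^L)` becomes an
isomorphism after tensoring with the localization
`S^L = S[α⁻¹ : α ∈ X, α ≠ 0, α ∉ L]`. -/
theorem structAlg_localization_bijective
    (G : MomentGraph (Fin n → ℤ)) (k : Type) [Field k]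
    [Finite G.V] [Finite G.E]
    (hnz : ∀ e, G.label e ≠ 0)
    (L : Submodule ℤ (Fin n → ℤ))
    (hsat : ∀ (x : Fin n → ℤ) (m : ℤ), m ≠ 0 → m • x ∈ L → x ∈ L) :
    Function.Bijective
      (LinearMap.rTensor
        (Localization (Submonoid.closure
          {s : MvPolynomial (Fin n) k | ∃ α : Fin n → ℤ, α ≠ 0 ∧ α ∉ L ∧ s = latEmb k n α}))
        (Submodule.inclusion (structAlg_le_restrict G L k))) :=
  structAlg_localization_bijective_general G k L
end

section
/- If H is a finite moment graph with structure algebra Z over a field k, then every Z-module M is generically semisimple, i.e. M^0 = ⊕_{x ∈ 𝒱} M^{0,x}, where M^{0,x} is the submodule of M^0 on which each (z_w) ∈ Z acts by multiplication with z_x. -/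
variable {n : ℕ} {k : Type} [Field k]

/-- The structure algebra `Z(H)` as an `S`-subalgebra of `∏_{x ∈ V} S`. -/
noncomputable def structAlgebra (G : MomentGraph (Fin n → ℤ)) (k : Type) [Field k] :
    Subalgebra (MvPolynomial (Fin n) k) (G.V → MvPolynomial (Fin n) k) where
  carrier := {z | ∀ e, z (G.src e) - z (G.tgt e) ∈ Ideal.span {latEmb k n (G.label e)}}
  add_mem' := by
    intro a b ha hb e
    have := Ideal.add_mem _ (ha e) (hb e)
    simpa [add_sub_add_comm] using this
  mul_mem' := by
    intro a b ha hb e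
    have h1 := Ideal.mul_mem_left _ (a (G.src e)) (hb e)
    have h2 := Ideal.mul_mem_right (b (G.tgt e)) _ (ha e)
    have := Ideal.add_mem _ h1 h2
    have heq : a (G.src e) * (b (G.src e) - b (G.tgt e)) +
        (a (G.src e) - a (G.tgt e)) * b (G.tgt e) =
        a (G.src e) * b (G.src e) - a (G.tgt e) * b (G.tgt e) := by ring
    simpa [heq] using this
  algebraMap_mem' := by
    intro r e
    simp

/-- The multiplicative set of all (embedded) nonzero lattice elements; the
localization of `S` at it is `S⁰ = S[α⁻¹ : α ∈ X, α ≠ 0]`. -/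
noncomputable def genericSet (k : Type) [Field k] (n : ℕ) :
    Submonoid (MvPolynomial (Fin n) k) :=
  Submonoid.closure {s | ∃ α : Fin n → ℤ, α ≠ 0 ∧ s = latEmb k n α}

section

variable (k)
variable (G : MomentGraph (Fin n → ℤ))
variable (M : Type) [AddCommGroup M]
  [Module (MvPolynomial (Fin n) k) M]
  [Module (structAlgebra G k) M]
  [IsScalarTower (MvPolynomial (Fin n) k) (structAlgebra G k) M]

/-- The action of an element of the structure algebra as an `S`-linear
endomorphism of `M`. -/
noncomputable def zsmulLin (z : structAlgebra G k) : M →ₗ[MvPolynomial (Fin n) k] M where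
  toFun m := z • m
  map_add' := smul_add z
  map_smul' s m := (smul_comm s z m).symm

/-- The generic stalk `M^{0,x}` of a `Z`-module: the set of elements of
`M⁰ = M ⊗_S S⁰` on which every `(z_w) ∈ Z` acts as multiplication by `z_x`. -/
noncomputable def genStalk (x : G.V) :
    Submodule (MvPolynomial (Fin n) k) (LocalizedModule (genericSet k n) M) where
  carrier := {m | ∀ z : structAlgebra G k,
    LocalizedModule.map (genericSet k n) (zsmulLin k G M z) m = (z.1 x) • m}
  add_mem' := by
    intro a b ha hb z
    simp [ha z, hb z, smul_add]
  zero_mem' := by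
    intro z
    simp
  smul_mem' := by
    intro c a ha z
    simp [ha z, smul_comm c (z.1 x)]

/-!
Let `P ∈ S` be the product of the (nonzero) edge labels. For each vertex `x` the point mass
`P δ_x` lies in `Z`, because every label divides `P`. It satisfies `z (P δ_x) = z_x (P δ_x)` for
all `z ∈ Z`, so on `M⁰` it maps into `M^{0,x}` and kills `M^{0,y}` for `y ≠ x`. Since
`∑_x P δ_x = P` and `P` acts bijectively on `M⁰`, every `m = P m'` is `∑_x (P δ_x) m'`, and an
element of `M^{0,x}` lying in the sum of the other `M^{0,y}` is killed by `P δ_x`, i.e. by `P`.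
-/

section JointEigenspace

variable {R V N : Type*} [CommRing R] [AddCommGroup N] [Module R N]
  {A : Subalgebra R (V → R)} (ρ : A →ₐ[R] Module.End R N)

def jointEigenspace (x : V) : Submodule R N :=
  ⨅ z : A, (ρ z).eigenspace ((z : V → R) x)

variable {ρ} in
theorem mem_jointEigenspace {x : V} {m : N} :
    m ∈ jointEigenspace ρ x ↔ ∀ z : A, ρ z m = (z : V → R) x • m := by
  simp only [jointEigenspace, Submodule.mem_iInf, Module.End.mem_eigenspace_iff]

theorem mul_single_eq_smul [DecidableEq V] {x : V} {p : R} (hx : Pi.single x p ∈ A) (z : A) :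
    z * ⟨Pi.single x p, hx⟩ = (z : V → R) x • ⟨Pi.single x p, hx⟩ := by
  ext w
  by_cases hw : w = x
  · subst hw
    simp [smul_eq_mul]
  · simp [hw]

theorem apply_single_mem_jointEigenspace [DecidableEq V] {x : V} {p : R}
    (hx : Pi.single x p ∈ A) (m : N) :
    ρ ⟨Pi.single x p, hx⟩ m ∈ jointEigenspace ρ x := by
  refine mem_jointEigenspace.mpr fun z => ?_
  rw [← Module.End.mul_apply, ← map_mul, mul_single_eq_smul, map_smul, LinearMap.smul_apply]

theorem apply_single_eq_zero_of_mem_jointEigenspace [DecidableEq V] {x y : V} {p : R}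
    (hx : Pi.single x p ∈ A) (hyx : y ≠ x) {m : N} (hm : m ∈ jointEigenspace ρ y) :
    ρ ⟨Pi.single x p, hx⟩ m = 0 := by
  rw [mem_jointEigenspace.mp hm]
  simp [Pi.single_eq_of_ne hyx]

theorem iSupIndep_jointEigenspace [DecidableEq V] {p : R}
    (hp : Function.Injective (p • · : N → N)) (hsingle : ∀ x, Pi.single x p ∈ A) :
    iSupIndep (jointEigenspace ρ) := by
  intro x
  rw [Submodule.disjoint_def]
  intro m hmx hm
  let ex : A := ⟨Pi.single x p, hsingle x⟩
  have hker : (⨆ (y) (_ : y ≠ x), jointEigenspace ρ y) ≤ LinearMap.ker (ρ ex) :=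
    iSup₂_le fun y hyx m' hm' =>
      apply_single_eq_zero_of_mem_jointEigenspace ρ (hsingle x) hyx hm'
  have hpm : p • m = 0 := by
    have := mem_jointEigenspace.mp hmx ex
    rw [hker hm] at this
    simpa [ex, eq_comm] using this
  exact hp (hpm.trans (smul_zero p).symm)

theorem sum_single_eq_algebraMap [Fintype V] [DecidableEq V] {p : R}
    (hsingle : ∀ x, Pi.single x p ∈ A) :
    ∑ x, (⟨Pi.single x p, hsingle x⟩ : A) = algebraMap R A p := by
  ext w
  simp [Finset.sum_apply, Pi.single_apply]

theorem iSup_jointEigenspace_eq_top [Finite V] [DecidableEq V] {p : R}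
    (hp : Function.Surjective (p • · : N → N)) (hsingle : ∀ x, Pi.single x p ∈ A) :
    ⨆ x, jointEigenspace ρ x = ⊤ := by
  have := Fintype.ofFinite V
  refine eq_top_iff.mpr fun m _ => ?_
  obtain ⟨m', rfl⟩ := hp m
  have hdecomp : p • m' = ∑ x, ρ ⟨Pi.single x p, hsingle x⟩ m' := by
    rw [← LinearMap.sum_apply, ← map_sum, sum_single_eq_algebraMap, AlgHom.commutes,
      Module.algebraMap_end_apply]
  show p • m' ∈ _
  rw [hdecomp]
  exact Submodule.sum_mem _ fun x _ =>
    Submodule.mem_iSup_of_mem x (apply_single_mem_jointEigenspace ρ (hsingle x) m')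

end JointEigenspace

namespace LocalizedModule

variable {R P : Type*} [CommSemiring R] [AddCommMonoid P] [Module R P]

noncomputable def mapAlgHom (T : Submonoid R) :
    Module.End R P →ₐ[R] Module.End R (LocalizedModule T P) where
  toFun f := (map T f).restrictScalars R
  map_one' := by
    rw [Module.End.one_eq_id, map_id]
    rfl
  map_mul' f g := by
    ext x
    induction x using induction_on with
    | _ m s => simp
  map_zero' := by
    rw [map_zero]
    rfl
  map_add' f g := by
    rw [map_add]
    rfl
  commutes' r := by
    ext x
    induction x using induction_on with
    | _ m s => simp [Module.algebraMap_end_apply, smul'_mk]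

end LocalizedModule

variable {k G} in
theorem exists_mem_genericSet_forall_latEmb_label_dvd [Finite G.E] (hnz : ∀ e, G.label e ≠ 0) :
    ∃ p ∈ genericSet k n, ∀ e, latEmb k n (G.label e) ∣ p := by
  have := Fintype.ofFinite G.E
  exact ⟨∏ e, latEmb k n (G.label e),
    prod_mem fun e _ => Submonoid.subset_closure ⟨G.label e, hnz e, rfl⟩,
    fun e => Finset.dvd_prod_of_mem _ (Finset.mem_univ e)⟩

variable {k G} in
theorem single_mem_structAlgebra [DecidableEq G.V] {p : MvPolynomial (Fin n) k}
    (hp : ∀ e, latEmb k n (G.label e) ∣ p) (x : G.V) : Pi.single x p ∈ structAlgebra G k := by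
  have hdvd (e : G.E) (w : G.V) :
      latEmb k n (G.label e) ∣ (Pi.single x p : G.V → MvPolynomial (Fin n) k) w := by
    rcases eq_or_ne w x with rfl | hw
    · simpa using hp e
    · simp [Pi.single_eq_of_ne hw]
  intro e
  exact Ideal.mem_span_singleton.mpr ((hdvd e _).sub (hdvd e _))

theorem genStalk_eq_jointEigenspace (x : G.V) :
    genStalk k G M x = jointEigenspace
      ((LocalizedModule.mapAlgHom (genericSet k n)).comp
        (Algebra.lsmul (A := structAlgebra G k) (MvPolynomial (Fin n) k)
          (MvPolynomial (Fin n) k) M)) x := by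
  ext m
  rw [mem_jointEigenspace]
  rfl

/-- If `H` is a finite moment graph with structure algebra `Z`
over the field `k`, then every `Z`-module `M` is generically semisimple:
`M⁰ = ⊕_{x ∈ 𝒱} M^{0,x}`. -/
theorem generically_semisimple
    [Finite G.V] [Finite G.E] (hnz : ∀ e, G.label e ≠ 0) :
    iSupIndep (fun x : G.V => genStalk k G M x) ∧
    (⨆ x : G.V, genStalk k G M x) = ⊤ := by
  classical
  obtain ⟨P, hPmem, hPdvd⟩ := exists_mem_genericSet_forall_latEmb_label_dvd (k := k) hnz
  have hP : Function.Bijective (P • · : LocalizedModule (genericSet k n) M → _) :=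
    (Module.End.isUnit_iff _).mp <|
      IsLocalizedModule.map_units (LocalizedModule.mkLinearMap (genericSet k n) M) ⟨P, hPmem⟩
  have hsingle := single_mem_structAlgebra (G := G) hPdvd
  simp only [genStalk_eq_jointEigenspace]
  exact ⟨iSupIndep_jointEigenspace _ hP.1 hsingle, iSup_jointEigenspace_eq_top _ hP.2 hsingle⟩

end
end
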